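/- Let ν ∈ ℝ. For every t ∈ ℝ, the function s ↦ [ G^B_{n_x n_x n_x τ_y} + (2−ν) G^B_{n_x τ_x τ_x τ_y} + (1−ν)κ(t)·( G^B_{τ_x τ_x τ_y} − G^B_{n_x n_x τ_y} ) ](γ(t), γ(t+s)), defined for small s ≠ 0 (with x-derivatives in the directions n(t), τ(t) and y-derivative in the direction τ(t+s)), has a finite limit as s → 0; in particular the 1/s singularities of the last two terms cancel. -/

import Mathlib

open Real Filter Topology MeasureTheory

noncomputable section

/-- Euclidean dot product on `ℝ × ℝ`. -/
def dot2 (v w : ℝ × ℝ) : ℝ := v.1 * w.1 + v.2 * w.2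

/-- Unit tangent vector `τ(s) = γ′(s)`. -/
def tang (γ : ℝ → ℝ × ℝ) (s : ℝ) : ℝ × ℝ := deriv γ s

/-- Unit normal vector `n(s) = (τ₂(s), −τ₁(s))`. -/
def nor (γ : ℝ → ℝ × ℝ) (s : ℝ) : ℝ × ℝ := ((deriv γ s).2, -(deriv γ s).1)

/-- Signed curvature `κ(s) = −γ″(s)·n(s)`. -/
def curv (γ : ℝ → ℝ × ℝ) (s : ℝ) : ℝ := -(dot2 (deriv (deriv γ) s) (nor γ s))

/-- The biharmonic Green's function `G^B(x,y) = (1/(8π))‖x−y‖² log‖x−y‖`. -/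
def GB (x y : ℝ × ℝ) : ℝ :=
  1 / (8 * π) * dot2 (x - y) (x - y) * Real.log (Real.sqrt (dot2 (x - y) (x - y)))

/-- Directional derivative in the first argument, in the direction `v`. -/
def ddx (v : ℝ × ℝ) (f : ℝ × ℝ → ℝ × ℝ → ℝ) (x y : ℝ × ℝ) : ℝ :=
  deriv (fun e : ℝ => f (x + e • v) y) 0

/-- Directional derivative in the second argument, in the direction `v`. -/
def ddy (v : ℝ × ℝ) (f : ℝ × ℝ → ℝ × ℝ → ℝ) (x y : ℝ × ℝ) : ℝ :=
  deriv (fun e : ℝ => f x (y + e • v)) 0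

/-! Write `u = γ(t) - γ(t+s)` and `w = τ(t+s)` in the frame `(τ(t), n(t))`. Taylor's theorem gives
`u·τ(t) = s Λ(s)`, `u·n(t) = s² M(s)` and `n(t)·w = s W(s)` with `Λ, M, W` differentiable at `0`,
`Λ(0) = -1`, `M(0) = κ(t)/2`, `W(0) = -κ(t)`. The third and fourth derivatives of `G^B` are
rational functions of the dot products of `u`, `w` and the directions, so substituting these expansions
writes the whole combination as `F(s)/s`, where `F` is a rational function of `s, Λ, M, W, τ(t)·w`
whose denominator is a power of `Λ² + s² M²`, hence is differentiable at `0`. Because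
`W(0) = -2 M(0)`, `F(0) = 0`, and the limit is `F′(0)`. -/

open scoped Nat

lemma exists_eq_pow_mul_differentiableAt {f : ℝ → ℝ} {n : ℕ} (hf : ContDiff ℝ (n + 1) f)
    (hvanish : ∀ k < n, iteratedDeriv k f 0 = 0) :
    ∃ q : ℝ → ℝ, DifferentiableAt ℝ q 0 ∧ q 0 = iteratedDeriv n f 0 / n ! ∧
      ∀ s, f s = s ^ n * q s := by
  set a := iteratedDeriv n f 0 / (n ! : ℝ)
  set b := iteratedDeriv (n + 1) f 0 / ((n + 1)! : ℝ)
  have htaylor (s : ℝ) : taylorWithinEval f (n + 1) Set.univ 0 s = s ^ n * (a + b * s) := by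
    rw [taylor_within_apply, Finset.sum_range_succ, Finset.sum_range_succ,
      Finset.sum_eq_zero fun k hk => by
        rw [iteratedDerivWithin_univ, hvanish k (Finset.mem_range.1 hk), smul_zero]]
    simp only [iteratedDerivWithin_univ, sub_zero, smul_eq_mul, a, b, Nat.factorial_succ,
      Nat.cast_mul]
    field_simp
    ring
  have hrem : Tendsto (fun s => (f s - s ^ n * (a + b * s)) / s ^ (n + 1)) (𝓝 0) (𝓝 0) := by
    have := Real.taylor_tendsto convex_univ (Set.mem_univ 0) (n := n + 1) (f := f)
      (by exact_mod_cast hf.contDiffOn)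
    simpa only [htaylor, sub_zero, nhdsWithin_univ] using this
  have hf0 : f 0 = 0 ^ n * a := by
    rcases n.eq_zero_or_pos with rfl | hn
    · simp [a]
    · simpa [zero_pow hn.ne'] using hvanish 0 hn
  refine ⟨fun s => if s = 0 then a else f s / s ^ n, ?_, if_pos rfl, fun s => ?_⟩
  · refine (hasDerivAt_iff_tendsto_slope.2 ?_).differentiableAt (f' := b)
    refine ((hrem.mono_left nhdsWithin_le_nhds).add_const b).congr' ?_ |>.trans (by rw [zero_add])
    filter_upwards [self_mem_nhdsWithin] with s (hs : s ≠ 0)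
    simp only [slope_def_field, if_neg hs, ↓reduceIte, sub_zero]
    field_simp
    ring
  · by_cases hs : s = 0
    · simp [hs, hf0]
    · simp only [if_neg hs]
      field_simp

lemma exists_eq_mul_differentiableAt {f : ℝ → ℝ} (hf : ContDiff ℝ 2 f) (h0 : f 0 = 0) :
    ∃ q : ℝ → ℝ, DifferentiableAt ℝ q 0 ∧ q 0 = deriv f 0 ∧ ∀ s, f s = s * q s := by
  obtain ⟨q, hq, hq0, hfq⟩ := exists_eq_pow_mul_differentiableAt (n := 1) (by norm_num; exact hf)
    (by simpa using h0)
  exact ⟨q, hq, by simpa using hq0, by simpa using hfq⟩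

lemma exists_eq_sq_mul_differentiableAt {f : ℝ → ℝ} (hf : ContDiff ℝ 3 f) (h0 : f 0 = 0)
    (h1 : deriv f 0 = 0) :
    ∃ q : ℝ → ℝ, DifferentiableAt ℝ q 0 ∧ q 0 = deriv (deriv f) 0 / 2 ∧
      ∀ s, f s = s ^ 2 * q s := by
  obtain ⟨q, hq, hq0, hfq⟩ := exists_eq_pow_mul_differentiableAt (n := 2) (by norm_num; exact hf)
    (by intro k hk; interval_cases k <;> simpa [iteratedDeriv_succ])
  exact ⟨q, hq, by simpa [iteratedDeriv_succ] using hq0, hfq⟩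

lemma dot2_comm (u w : ℝ × ℝ) : dot2 u w = dot2 w u := by
  simp only [dot2]; ring

@[simp] lemma dot2_zero_right (u : ℝ × ℝ) : dot2 u 0 = 0 := by simp [dot2]

@[simp] lemma dot2_zero_left (u : ℝ × ℝ) : dot2 0 u = 0 := by simp [dot2]

@[simp] lemma dot2_neg_left (u w : ℝ × ℝ) : dot2 (-u) w = -dot2 u w := by
  simp only [dot2, Prod.fst_neg, Prod.snd_neg]; ring

@[simp] lemma dot2_neg_right (u w : ℝ × ℝ) : dot2 u (-w) = -dot2 u w := by
  simp only [dot2, Prod.fst_neg, Prod.snd_neg]; ring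

lemma dot2_self_nonneg (u : ℝ × ℝ) : 0 ≤ dot2 u u := by
  simp only [dot2]; nlinarith [mul_self_nonneg u.1, mul_self_nonneg u.2]

lemma dot2_self_pos {u : ℝ × ℝ} (hu : u ≠ 0) : 0 < dot2 u u := by
  have : u.1 ≠ 0 ∨ u.2 ≠ 0 := by
    by_contra! h
    exact hu (Prod.ext h.1 h.2)
  simp only [dot2]
  rcases this with h | h <;> nlinarith [mul_self_pos.2 h, mul_self_nonneg u.1, mul_self_nonneg u.2]

def perp (p : ℝ × ℝ) : ℝ × ℝ := (p.2, -p.1)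

lemma nor_eq_perp (γ : ℝ → ℝ × ℝ) (s : ℝ) : nor γ s = perp (tang γ s) := rfl

lemma dot2_perp_perp (p : ℝ × ℝ) : dot2 (perp p) (perp p) = dot2 p p := by
  simp only [dot2, perp]; ring

lemma dot2_perp_self (p : ℝ × ℝ) : dot2 (perp p) p = 0 := by
  simp only [dot2, perp]; ring

lemma dot2_eq_frame {p : ℝ × ℝ} (hp : dot2 p p = 1) (u w : ℝ × ℝ) :
    dot2 u w = dot2 u p * dot2 p w + dot2 u (perp p) * dot2 (perp p) w := by
  simp only [dot2, perp] at *
  linear_combination (-(u.1 * w.1 + u.2 * w.2)) * hp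

lemma HasDerivAt.dot2 {f g : ℝ → ℝ × ℝ} {f' g' : ℝ × ℝ} {s : ℝ} (hf : HasDerivAt f f' s)
    (hg : HasDerivAt g g' s) :
    HasDerivAt (fun s => dot2 (f s) (g s)) (dot2 f' (g s) + dot2 (f s) g') s := by
  have fst {h : ℝ → ℝ × ℝ} {h'} (hh : HasDerivAt h h' s) : HasDerivAt (fun s => (h s).1) h'.1 s :=
    (ContinuousLinearMap.fst ℝ ℝ ℝ).hasFDerivAt.comp_hasDerivAt s hh
  have snd {h : ℝ → ℝ × ℝ} {h'} (hh : HasDerivAt h h' s) : HasDerivAt (fun s => (h s).2) h'.2 s :=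
    (ContinuousLinearMap.snd ℝ ℝ ℝ).hasFDerivAt.comp_hasDerivAt s hh
  have h := ((fst hf).fun_mul (fst hg)).fun_add ((snd hf).fun_mul (snd hg))
  simp only [_root_.dot2]
  exact h.congr_deriv (by ring)

lemma hasDerivAt_line (u v : ℝ × ℝ) (e : ℝ) : HasDerivAt (fun e : ℝ => u + e • v) v e := by
  simpa using ((hasDerivAt_id e).smul_const v).const_add u

lemma hasDerivAt_dot2_line (u v w : ℝ × ℝ) :
    HasDerivAt (fun e : ℝ => dot2 (u + e • v) w) (dot2 v w) 0 := by
  simpa using (hasDerivAt_line u v 0).dot2 (hasDerivAt_const 0 w)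

lemma hasDerivAt_dot2_self_line (u v : ℝ × ℝ) :
    HasDerivAt (fun e : ℝ => dot2 (u + e • v) (u + e • v)) (2 * dot2 u v) 0 := by
  simpa [dot2_comm v u, two_mul] using (hasDerivAt_line u v 0).dot2 (hasDerivAt_line u v 0)

lemma hasDerivAt_log_dot2_self_line {u : ℝ × ℝ} (hu : u ≠ 0) (v : ℝ × ℝ) :
    HasDerivAt (fun e : ℝ => Real.log (dot2 (u + e • v) (u + e • v)))
      (2 * dot2 u v / dot2 u u) 0 := by
  simpa using (hasDerivAt_dot2_self_line u v).log (by simpa using (dot2_self_pos hu).ne')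

/- `gbXXXY a z v w (x - y)` is `G^B_{a_x z_x v_x w_y}(x, y)` for `x ≠ y`, and likewise for the
shorter names. -/

def gbY (w u : ℝ × ℝ) : ℝ := -(1 / (8 * π)) * (dot2 u w * (Real.log (dot2 u u) + 1))

def gbXY (v w u : ℝ × ℝ) : ℝ :=
  -(1 / (8 * π)) * (dot2 v w * (Real.log (dot2 u u) + 1) + 2 * dot2 u w * dot2 u v / dot2 u u)

def gbXXY (z v w u : ℝ × ℝ) : ℝ :=
  -(1 / (8 * π)) *
    (2 * (dot2 v w * dot2 u z + dot2 z w * dot2 u v + dot2 u w * dot2 z v) / dot2 u u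
      - 4 * dot2 u w * dot2 u v * dot2 u z / dot2 u u ^ 2)

def gbXXXY (a z v w u : ℝ × ℝ) : ℝ :=
  -(1 / (8 * π)) *
    (2 * (dot2 v w * dot2 a z + dot2 z w * dot2 a v + dot2 a w * dot2 z v) / dot2 u u
      - 4 * ((dot2 v w * dot2 u z + dot2 z w * dot2 u v + dot2 u w * dot2 z v) * dot2 u a
          + dot2 a w * dot2 u v * dot2 u z + dot2 u w * dot2 a v * dot2 u z
          + dot2 u w * dot2 u v * dot2 a z) / dot2 u u ^ 2
      + 16 * dot2 u w * dot2 u v * dot2 u z * dot2 u a / dot2 u u ^ 3)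

lemma hasDerivAt_GB_profile {u : ℝ × ℝ} (hu : u ≠ 0) (v : ℝ × ℝ) :
    HasDerivAt (fun e : ℝ => 1 / (16 * π) *
        (dot2 (u + e • v) (u + e • v) * Real.log (dot2 (u + e • v) (u + e • v))))
      (-gbY v u) 0 := by
  refine (((hasDerivAt_dot2_self_line u v).mul
    (hasDerivAt_log_dot2_self_line hu v)).const_mul _).congr_deriv ?_
  have := (dot2_self_pos hu).ne'
  simp only [gbY, zero_smul, add_zero]
  field_simp
  ring

lemma hasDerivAt_gbY {u : ℝ × ℝ} (hu : u ≠ 0) (v w : ℝ × ℝ) :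
    HasDerivAt (fun e : ℝ => gbY w (u + e • v)) (gbXY v w u) 0 := by
  refine (((hasDerivAt_dot2_line u v w).mul
    ((hasDerivAt_log_dot2_self_line hu v).add_const 1)).const_mul _).congr_deriv ?_
  have := (dot2_self_pos hu).ne'
  simp only [gbXY, zero_smul, add_zero]
  field_simp

lemma hasDerivAt_gbXY {u : ℝ × ℝ} (hu : u ≠ 0) (a v w : ℝ × ℝ) :
    HasDerivAt (fun e : ℝ => gbXY v w (u + e • a)) (gbXXY a v w u) 0 := by
  have hne : dot2 (u + (0 : ℝ) • a) (u + (0 : ℝ) • a) ≠ 0 := by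
    simpa using (dot2_self_pos hu).ne'
  refine ((((hasDerivAt_log_dot2_self_line hu a).add_const 1).const_mul (dot2 v w)).add
    ((((hasDerivAt_dot2_line u a w).const_mul 2).mul (hasDerivAt_dot2_line u a v)).div
      (hasDerivAt_dot2_self_line u a) hne) |>.const_mul _).congr_deriv ?_
  simp only [gbXXY, zero_smul, add_zero, Pi.mul_apply] at hne ⊢
  field_simp
  ring

lemma hasDerivAt_gbXXY {u : ℝ × ℝ} (hu : u ≠ 0) (a z v w : ℝ × ℝ) :
    HasDerivAt (fun e : ℝ => gbXXY z v w (u + e • a)) (gbXXXY a z v w u) 0 := by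
  have hne : dot2 (u + (0 : ℝ) • a) (u + (0 : ℝ) • a) ≠ 0 := by
    simpa using (dot2_self_pos hu).ne'
  have hsum := ((((hasDerivAt_dot2_line u a z).const_mul (dot2 v w)).add
    ((hasDerivAt_dot2_line u a v).const_mul (dot2 z w))).add
    ((hasDerivAt_dot2_line u a w).mul_const (dot2 z v))).const_mul 2
  have hprod := (((hasDerivAt_dot2_line u a w).const_mul 4).mul
    (hasDerivAt_dot2_line u a v)).mul (hasDerivAt_dot2_line u a z)
  refine ((hsum.div (hasDerivAt_dot2_self_line u a) hne).sub
    (hprod.div ((hasDerivAt_dot2_self_line u a).pow 2) (pow_ne_zero 2 hne))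
    |>.const_mul _).congr_deriv ?_
  simp only [gbXXXY, zero_smul, add_zero, Pi.mul_apply, Pi.add_apply, Pi.pow_apply] at hne ⊢
  field_simp
  ring

lemma ddx_eq_of_eq_sub {F : ℝ × ℝ → ℝ × ℝ → ℝ} {g : ℝ × ℝ → ℝ} {v x y : ℝ × ℝ} {d : ℝ}
    (hF : ∀ x y, x ≠ y → F x y = g (x - y))
    (hg : HasDerivAt (fun e : ℝ => g (x - y + e • v)) d 0) (hxy : x ≠ y) :
    ddx v F x y = d := by
  have hne : ∀ᶠ e : ℝ in 𝓝 0, x + e • v ≠ y :=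
    (continuous_const.add (continuous_id.smul continuous_const)).continuousAt.eventually_ne
      (by simpa using hxy)
  have heq : (fun e : ℝ => F (x + e • v) y) =ᶠ[𝓝 0] fun e => g (x - y + e • v) := by
    filter_upwards [hne] with e he
    rw [hF _ _ he, add_sub_right_comm]
  rw [ddx, heq.deriv_eq, hg.deriv]

lemma ddy_GB {x y : ℝ × ℝ} (hxy : x ≠ y) (w : ℝ × ℝ) : ddy w GB x y = gbY w (x - y) := by
  have hprofile : (fun e : ℝ => GB x (y + e • w)) = fun e => 1 / (16 * π) *
      (dot2 (x - y + e • -w) (x - y + e • -w) *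
        Real.log (dot2 (x - y + e • -w) (x - y + e • -w))) := by
    funext e
    rw [GB, Real.log_sqrt (dot2_self_nonneg _), smul_neg, ← sub_eq_add_neg, sub_sub]
    ring
  rw [ddy, hprofile, (hasDerivAt_GB_profile (sub_ne_zero.2 hxy) (-w)).deriv]
  simp only [gbY, dot2_neg_right]
  ring

lemma ddx_ddy_GB {x y : ℝ × ℝ} (hxy : x ≠ y) (v w : ℝ × ℝ) :
    ddx v (ddy w GB) x y = gbXY v w (x - y) :=
  ddx_eq_of_eq_sub (fun _ _ h => ddy_GB h w) (hasDerivAt_gbY (sub_ne_zero.2 hxy) v w) hxy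

lemma ddx_ddx_ddy_GB {x y : ℝ × ℝ} (hxy : x ≠ y) (z v w : ℝ × ℝ) :
    ddx z (ddx v (ddy w GB)) x y = gbXXY z v w (x - y) :=
  ddx_eq_of_eq_sub (fun _ _ h => ddx_ddy_GB h v w) (hasDerivAt_gbXY (sub_ne_zero.2 hxy) z v w) hxy

lemma ddx_ddx_ddx_ddy_GB {x y : ℝ × ℝ} (hxy : x ≠ y) (a z v w : ℝ × ℝ) :
    ddx a (ddx z (ddx v (ddy w GB))) x y = gbXXXY a z v w (x - y) :=
  ddx_eq_of_eq_sub (fun _ _ h => ddx_ddx_ddy_GB h z v w)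
    (hasDerivAt_gbXXY (sub_ne_zero.2 hxy) a z v w) hxy

section Curve

variable {γ : ℝ → ℝ × ℝ} (t : ℝ)

lemma hasDerivAt_dot2_chord (hγ : ContDiff ℝ (⊤ : ℕ∞) γ) (c : ℝ × ℝ) (s : ℝ) :
    HasDerivAt (fun s => dot2 (γ t - γ (t + s)) c) (-dot2 (deriv γ (t + s)) c) s := by
  have hd : HasDerivAt (fun s => γ (t + s)) (deriv γ (t + s)) s :=
    ((hγ.differentiable (by simp)) (t + s)).hasDerivAt.comp_const_add t s
  simpa using ((hasDerivAt_const s (γ t)).sub hd).dot2 (hasDerivAt_const s c)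

lemma hasDerivAt_dot2_tang (hγ : ContDiff ℝ (⊤ : ℕ∞) γ) (c : ℝ × ℝ) (s : ℝ) :
    HasDerivAt (fun s => dot2 c (tang γ (t + s))) (dot2 c (deriv (deriv γ) (t + s))) s := by
  have hd : HasDerivAt (fun s => deriv γ (t + s)) (deriv (deriv γ) (t + s)) s :=
    (((contDiff_infty_iff_deriv.1 hγ).2.differentiable (by simp)) (t + s)).hasDerivAt
      |>.comp_const_add t s
  exact ((hasDerivAt_const s c).dot2 hd).congr_deriv (by simp)

lemma contDiff_dot2_chord (hγ : ContDiff ℝ (⊤ : ℕ∞) γ) (c : ℝ × ℝ) :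
    ContDiff ℝ (⊤ : ℕ∞) (fun s => dot2 (γ t - γ (t + s)) c) := by
  simp only [dot2]
  fun_prop

lemma contDiff_dot2_tang (hγ : ContDiff ℝ (⊤ : ℕ∞) γ) (c : ℝ × ℝ) :
    ContDiff ℝ (⊤ : ℕ∞) (fun s => dot2 c (tang γ (t + s))) := by
  have := (contDiff_infty_iff_deriv.1 hγ).2
  simp only [dot2, tang]
  fun_prop

lemma exists_chord_tang_eq_mul (hγ : ContDiff ℝ (⊤ : ℕ∞) γ)
    (hunit : dot2 (tang γ t) (tang γ t) = 1) :
    ∃ Λ : ℝ → ℝ, DifferentiableAt ℝ Λ 0 ∧ Λ 0 = -1 ∧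
      ∀ s, dot2 (γ t - γ (t + s)) (tang γ t) = s * Λ s := by
  obtain ⟨Λ, hΛ, hΛ0, hΛeq⟩ := exists_eq_mul_differentiableAt
    ((contDiff_dot2_chord t hγ _).of_le (by norm_cast)) (by simp)
  refine ⟨Λ, hΛ, ?_, hΛeq⟩
  rw [hΛ0, (hasDerivAt_dot2_chord t hγ _ 0).deriv, add_zero]
  exact congrArg Neg.neg hunit

lemma exists_chord_nor_eq_sq_mul (hγ : ContDiff ℝ (⊤ : ℕ∞) γ) :
    ∃ M : ℝ → ℝ, DifferentiableAt ℝ M 0 ∧ M 0 = curv γ t / 2 ∧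
      ∀ s, dot2 (γ t - γ (t + s)) (nor γ t) = s ^ 2 * M s := by
  have hderiv : deriv (fun s => dot2 (γ t - γ (t + s)) (nor γ t))
      = fun s => -dot2 (nor γ t) (tang γ (t + s)) := by
    funext s
    rw [(hasDerivAt_dot2_chord t hγ _ s).deriv, dot2_comm]; rfl
  obtain ⟨M, hM, hM0, hMeq⟩ := exists_eq_sq_mul_differentiableAt
    (f := fun s => dot2 (γ t - γ (t + s)) (nor γ t))
    ((contDiff_dot2_chord t hγ _).of_le (by norm_cast)) (by simp)
    (by rw [hderiv]; simp only [add_zero, nor_eq_perp, dot2_perp_self, neg_zero])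
  refine ⟨M, hM, ?_, hMeq⟩
  rw [hM0, hderiv, (hasDerivAt_dot2_tang t hγ _ 0).fun_neg.deriv, add_zero, curv, dot2_comm]

lemma exists_nor_tang_eq_mul (hγ : ContDiff ℝ (⊤ : ℕ∞) γ) :
    ∃ W : ℝ → ℝ, DifferentiableAt ℝ W 0 ∧ W 0 = -curv γ t ∧
      ∀ s, dot2 (nor γ t) (tang γ (t + s)) = s * W s := by
  obtain ⟨W, hW, hW0, hWeq⟩ := exists_eq_mul_differentiableAt
    (f := fun s => dot2 (nor γ t) (tang γ (t + s)))
    ((contDiff_dot2_tang t hγ _).of_le (by norm_cast))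
    (by simp only [add_zero, nor_eq_perp, dot2_perp_self])
  refine ⟨W, hW, ?_, hWeq⟩
  rw [hW0, (hasDerivAt_dot2_tang t hγ _ 0).deriv, add_zero, curv, neg_neg, dot2_comm]

end Curve

/- `s` times the kernel combination when `u·τ = sΛ`, `u·n = s²M`, `τ·w = T`, `n·w = sW`: every
term is `1/s` times a rational function whose denominator is a power of `R = Λ² + s²M²`, which
stays away from `0` as `s → 0`. -/
def frameKernel (ν κ s Λ M T W : ℝ) : ℝ :=
  let R := Λ ^ 2 + s ^ 2 * M ^ 2
  let P := Λ * T + s ^ 2 * M * W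
  (-1 / (8 * π)) *
    ((6 * W / R - 12 * (s ^ 2 * W * M ^ 2 + M * P) / R ^ 2 + 16 * s ^ 2 * P * M ^ 3 / R ^ 3)
      + (2 - ν) * (2 * W / R - 4 * (2 * T * Λ * M + P * M + W * Λ ^ 2) / R ^ 2
          + 16 * P * Λ ^ 2 * M / R ^ 3)
      + (1 - ν) * κ * (4 * (Λ * T - s ^ 2 * M * W) / R - 4 * P * (Λ ^ 2 - s ^ 2 * M ^ 2) / R ^ 2))

lemma frameKernel_zero (ν κ : ℝ) : frameKernel ν κ 0 (-1) (κ / 2) 1 (-κ) = 0 := by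
  simp only [frameKernel]
  ring

lemma differentiableAt_frameKernel (ν κ : ℝ) {Λ M T W : ℝ → ℝ} {s₀ : ℝ}
    (hΛ : DifferentiableAt ℝ Λ s₀) (hM : DifferentiableAt ℝ M s₀) (hT : DifferentiableAt ℝ T s₀)
    (hW : DifferentiableAt ℝ W s₀) (hΛ₀ : Λ s₀ ≠ 0) :
    DifferentiableAt ℝ (fun s => frameKernel ν κ s (Λ s) (M s) (T s) (W s)) s₀ := by
  have hR : Λ s₀ ^ 2 + s₀ ^ 2 * M s₀ ^ 2 ≠ 0 := by positivity
  simp only [frameKernel]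
  fun_prop (disch := exact pow_ne_zero _ hR)

lemma kernel_combination_eq_frameKernel_div {p u w : ℝ × ℝ} (hp : dot2 p p = 1) (ν κ : ℝ) {s Λ M T W : ℝ}
    (hs : s ≠ 0) (hΛ : Λ ≠ 0) (hup : dot2 u p = s * Λ) (hun : dot2 u (perp p) = s ^ 2 * M)
    (hpw : dot2 p w = T) (hnw : dot2 (perp p) w = s * W) :
    gbXXXY (perp p) (perp p) (perp p) w u + (2 - ν) * gbXXXY (perp p) p p w u
      + (1 - ν) * κ * (gbXXY p p w u - gbXXY (perp p) (perp p) w u)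
      = frameKernel ν κ s Λ M T W / s := by
  have hnn : dot2 (perp p) (perp p) = 1 := (dot2_perp_perp p).trans hp
  have huu : dot2 u u = s ^ 2 * (Λ ^ 2 + s ^ 2 * M ^ 2) := by
    rw [dot2_eq_frame hp u u, dot2_comm p u, dot2_comm (perp p) u, hup, hun]; ring
  have huw : dot2 u w = s * (Λ * T + s ^ 2 * M * W) := by
    rw [dot2_eq_frame hp u w, hup, hun, hpw, hnw]; ring
  have hR : Λ ^ 2 + s ^ 2 * M ^ 2 ≠ 0 := by positivity
  simp only [gbXXXY, gbXXY, frameKernel, huu, huw, hup, hun, hpw, hnw, hp, hnn, dot2_perp_self]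
  field_simp
  ring

theorem stmt9_general (γ : ℝ → ℝ × ℝ)
    (hγ : ContDiff ℝ (⊤ : ℕ∞) γ)
    (harc : ∀ s, dot2 (deriv γ s) (deriv γ s) = 1)
    (ν : ℝ) (t : ℝ) :
    ∃ c : ℝ,
      Tendsto
        (fun s : ℝ =>
          ddx (nor γ t) (ddx (nor γ t) (ddx (nor γ t)
              (ddy (tang γ (t + s)) GB))) (γ t) (γ (t + s))
            + (2 - ν) * ddx (nor γ t) (ddx (tang γ t) (ddx (tang γ t)
                (ddy (tang γ (t + s)) GB))) (γ t) (γ (t + s))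
            + (1 - ν) * curv γ t *
                (ddx (tang γ t) (ddx (tang γ t)
                    (ddy (tang γ (t + s)) GB)) (γ t) (γ (t + s))
                  - ddx (nor γ t) (ddx (nor γ t)
                      (ddy (tang γ (t + s)) GB)) (γ t) (γ (t + s))))
        (𝓝[≠] (0 : ℝ)) (𝓝 c) := by
  have hunit : dot2 (tang γ t) (tang γ t) = 1 := harc t
  obtain ⟨Λ, hΛ, hΛ0, hΛeq⟩ := exists_chord_tang_eq_mul t hγ hunit
  obtain ⟨M, hM, hM0, hMeq⟩ := exists_chord_nor_eq_sq_mul t hγ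
  obtain ⟨W, hW, hW0, hWeq⟩ := exists_nor_tang_eq_mul t hγ
  set F := fun s => frameKernel ν (curv γ t) s (Λ s) (M s) (dot2 (tang γ t) (tang γ (t + s))) (W s)
  have hF : HasDerivAt F (deriv F 0) 0 :=
    (differentiableAt_frameKernel ν _ hΛ hM (hasDerivAt_dot2_tang t hγ _ 0).differentiableAt hW
      (by simp [hΛ0])).hasDerivAt
  have hF0 : F 0 = 0 := by
    simpa [F, hΛ0, hM0, hW0, hunit] using frameKernel_zero ν (curv γ t)
  have hlim : Tendsto (fun s => F s / s) (𝓝[≠] 0) (𝓝 (deriv F 0)) := by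
    simpa [hF0, div_eq_inv_mul] using hF.tendsto_slope_zero
  refine ⟨deriv F 0, hlim.congr' ?_⟩
  have hΛne : ∀ᶠ s in 𝓝[≠] (0 : ℝ), Λ s ≠ 0 :=
    (hΛ.continuousAt.eventually_ne (by simp [hΛ0])).filter_mono nhdsWithin_le_nhds
  filter_upwards [self_mem_nhdsWithin, hΛne] with s (hs : s ≠ 0) hΛs
  have hxy : γ t ≠ γ (t + s) := fun h => by simpa [h, hs, hΛs] using hΛeq s
  rw [ddx_ddx_ddx_ddy_GB hxy, ddx_ddx_ddx_ddy_GB hxy, ddx_ddx_ddy_GB hxy, ddx_ddx_ddy_GB hxy]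
  exact (kernel_combination_eq_frameKernel_div hunit ν _ hs hΛs (hΛeq s) (hMeq s) rfl (hWeq s)).symm

theorem stmt9 (L : ℝ) (hL : 0 < L) (γ : ℝ → ℝ × ℝ)
    (hγ : ContDiff ℝ (⊤ : ℕ∞) γ)
    (hper : ∀ s, γ (s + L) = γ s)
    (hinj : Set.InjOn γ (Set.Ico 0 L))
    (harc : ∀ s, dot2 (deriv γ s) (deriv γ s) = 1)
    (ν : ℝ) (t : ℝ) :
    ∃ c : ℝ,
      Tendsto
        (fun s : ℝ =>
          ddx (nor γ t) (ddx (nor γ t) (ddx (nor γ t)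
              (ddy (tang γ (t + s)) GB))) (γ t) (γ (t + s))
            + (2 - ν) * ddx (nor γ t) (ddx (tang γ t) (ddx (tang γ t)
                (ddy (tang γ (t + s)) GB))) (γ t) (γ (t + s))
            + (1 - ν) * curv γ t *
                (ddx (tang γ t) (ddx (tang γ t)
                    (ddy (tang γ (t + s)) GB)) (γ t) (γ (t + s))
                  - ddx (nor γ t) (ddx (nor γ t)
                      (ddy (tang γ (t + s)) GB)) (γ t) (γ (t + s))))
        (𝓝[≠] (0 : ℝ)) (𝓝 c) :=
  stmt9_general γ hγ harc ν t
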